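/- For 0 < p < 1/2 and 0 ≤ e ≤ 2p, the value D(x) = H(x*p) - (1-e)·H(x) - H(p) is nonpositive for all x ∈ [0,1]. -/

import Mathlib

open Real Set

/-- Binary entropy function (base 2). -/
noncomputable def binH (t : ℝ) : ℝ := -(t * Real.logb 2 t) - (1 - t) * Real.logb 2 (1 - t)

/-- Binary convolution x*p = x(1-p)+p(1-x). -/
def bconv (x p : ℝ) : ℝ := x * (1 - p) + p * (1 - x)

/-- D(x) = H(x*p) - (1-e) H(x) - H(p). -/
noncomputable def Dfun (p e x : ℝ) : ℝ := binH (bconv x p) - (1 - e) * binH x - binH p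

/-!
Since `H(x) ≥ 0` and `1 - e ≥ 1 - 2p`, it suffices to treat `e = 2p`, i.e. to show
`g(x) = H(x*p) - (1-2p) H(x) ≤ H(p)`. Now `g(0) = H(p)`, `g` is symmetric about `1/2`, and on
`[0, 1/2]` its derivative `(1-2p) (H'(x*p) - H'(x))` is nonpositive, because `x ≤ x*p ≤ 1/2`
and `H' = log((1-t)/t)` is decreasing.
-/

lemma binH_eq_binEntropy_div_log_two (t : ℝ) : binH t = binEntropy t / log 2 := by
  simp only [binH, binEntropy, logb, log_inv]
  ring

lemma bconv_eq (x p : ℝ) : bconv x p = (1 - 2 * p) * x + p := by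
  rw [bconv]; ring

lemma bconv_one_sub (x p : ℝ) : bconv (1 - x) p = 1 - bconv x p := by
  simp only [bconv]; ring

noncomputable def bconvEntropyGap (p x : ℝ) : ℝ :=
  binEntropy (bconv x p) - (1 - 2 * p) * binEntropy x

lemma bconvEntropyGap_zero (p : ℝ) : bconvEntropyGap p 0 = binEntropy p := by
  simp [bconvEntropyGap, bconv]

lemma bconvEntropyGap_one_sub (p x : ℝ) : bconvEntropyGap p (1 - x) = bconvEntropyGap p x := by
  simp only [bconvEntropyGap, bconv_one_sub, binEntropy_one_sub]

section

variable {p x : ℝ}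

lemma hasDerivAt_bconvEntropyGap (hx₀ : x ≠ 0) (hx₁ : x ≠ 1) (hy₀ : bconv x p ≠ 0)
    (hy₁ : bconv x p ≠ 1) :
    HasDerivAt (bconvEntropyGap p)
      ((1 - 2 * p) * ((log (1 - bconv x p) - log (bconv x p)) - (log (1 - x) - log x))) x := by
  have hconv : HasDerivAt (fun x ↦ bconv x p) (1 - 2 * p) x := by
    simp only [bconv_eq]
    simpa using ((hasDerivAt_id x).const_mul (1 - 2 * p)).add_const p
  exact (((hasDerivAt_binEntropy hy₀ hy₁).comp x hconv).sub
    ((hasDerivAt_binEntropy hx₀ hx₁).const_mul (1 - 2 * p))).congr_deriv (by ring)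

lemma mem_Icc_bconv (hp₀ : 0 ≤ p) (hp₁ : p ≤ 1 / 2) (hx₁ : x ≤ 1 / 2) :
    bconv x p ∈ Icc x (1 / 2) := by
  rw [bconv_eq]
  constructor <;> nlinarith

lemma antitoneOn_bconvEntropyGap (hp₀ : 0 ≤ p) (hp₁ : p ≤ 1 / 2) :
    AntitoneOn (bconvEntropyGap p) (Icc 0 (1 / 2)) := by
  have hderiv : ∀ x ∈ Ioo (0 : ℝ) (1 / 2), HasDerivAt (bconvEntropyGap p)
      ((1 - 2 * p) * ((log (1 - bconv x p) - log (bconv x p)) - (log (1 - x) - log x))) x := by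
    rintro x ⟨hx₀, hx₁⟩
    obtain ⟨hxy, hy⟩ := mem_Icc_bconv hp₀ hp₁ hx₁.le
    exact hasDerivAt_bconvEntropyGap hx₀.ne' (by linarith) (by linarith) (by linarith)
  apply antitoneOn_of_deriv_nonpos (convex_Icc _ _)
  · exact Continuous.continuousOn (by unfold bconvEntropyGap bconv; fun_prop)
  · rw [interior_Icc]
    exact fun x hx ↦ (hderiv x hx).differentiableAt.differentiableWithinAt
  · rw [interior_Icc]
    intro x hx
    rw [(hderiv x hx).deriv]
    obtain ⟨hx₀, hx₁⟩ := hx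
    obtain ⟨hxy, hy⟩ := mem_Icc_bconv hp₀ hp₁ hx₁.le
    have hlog_one_sub : log (1 - bconv x p) ≤ log (1 - x) := log_le_log (by linarith) (by linarith)
    have hlog : log x ≤ log (bconv x p) := log_le_log hx₀ hxy
    exact mul_nonpos_of_nonneg_of_nonpos (by linarith) (by linarith)

lemma bconvEntropyGap_le (hp₀ : 0 ≤ p) (hp₁ : p ≤ 1 / 2) (hx : x ∈ Icc (0 : ℝ) 1) :
    bconvEntropyGap p x ≤ binEntropy p := by
  have hhalf : ∀ z ∈ Icc (0 : ℝ) (1 / 2), bconvEntropyGap p z ≤ binEntropy p := fun z hz ↦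
    bconvEntropyGap_zero p ▸
      antitoneOn_bconvEntropyGap hp₀ hp₁ (by norm_num) hz hz.1
  rcases le_total x (1 / 2) with h | h
  · exact hhalf x ⟨hx.1, h⟩
  · rw [← bconvEntropyGap_one_sub]
    exact hhalf (1 - x) ⟨by linarith [hx.2], by linarith⟩

end

theorem stmt4_general (p e : ℝ) (hp1 : p < 1 / 2) (he0 : 0 ≤ e) (he1 : e ≤ 2 * p) :
    ∀ x ∈ Set.Icc (0 : ℝ) 1, Dfun p e x ≤ 0 := by
  intro x hx
  have hgap := bconvEntropyGap_le (by linarith) hp1.le hx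
  have hHx := binEntropy_nonneg hx.1 hx.2
  have hnats : binEntropy (bconv x p) - (1 - e) * binEntropy x - binEntropy p ≤ 0 := by
    unfold bconvEntropyGap at hgap
    nlinarith
  have hbits : Dfun p e x =
      (binEntropy (bconv x p) - (1 - e) * binEntropy x - binEntropy p) / log 2 := by
    simp only [Dfun, binH_eq_binEntropy_div_log_two]
    ring
  rw [hbits]
  exact div_nonpos_of_nonpos_of_nonneg hnats (log_pos one_lt_two).le

/-- When e ≤ 2p, D(x) ≤ 0 for all x ∈ [0,1]. -/
theorem stmt4 (p e : ℝ) (hp0 : 0 < p) (hp1 : p < 1 / 2) (he0 : 0 ≤ e) (he1 : e ≤ 2 * p) :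
    ∀ x ∈ Set.Icc (0 : ℝ) 1, Dfun p e x ≤ 0 :=
  stmt4_general p e hp1 he0 he1
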